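/- Let γ be a density operator on D ⊗ E with Tr_D γ = ρ having full support on E, and suppose {R^x}_x is a POVM on D such that the post-measurement second-player states ρ^x := Tr_D[(√(R^x) ⊗ I) γ (√(R^x) ⊗ I)] are pairwise orthogonally supported. Then there exists a projective measurement {Q^x}_x on E with Q^x ρ Q^x = ρ^x for all x, and moreover measuring {R^x} on D and {Q^x} on E always yields equal outcomes: Tr[(R^{x'} ⊗ Q^x) γ] = 0 for x ≠ x'. -/

import Mathlib

open Matrix ComplexOrder Kronecker

/-- Partial trace over the first tensor factor. -/
noncomputable def ptraceLeft {D E : Type*} [Fintype D] [Fintype E]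
    (γ : Matrix (D × E) (D × E) ℂ) : Matrix E E ℂ :=
  Matrix.of fun e e' => ∑ d, γ (d, e) (d, e')

/-- The square root of a positive semidefinite matrix, as `Matrix.PosSemidef.sqrt` was defined
in the older Mathlib (removed since). -/
noncomputable def Matrix.PosSemidef.sqrt {n 𝕜 : Type*} [Fintype n] [DecidableEq n] [RCLike 𝕜]
    {A : Matrix n n 𝕜} (hA : A.PosSemidef) : Matrix n n 𝕜 :=
  hA.1.eigenvectorUnitary.1 * diagonal ((↑) ∘ (√·) ∘ hA.1.eigenvalues) *
    (star hA.1.eigenvectorUnitary : Matrix n n 𝕜)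

/-!
Cyclicity of the partial trace over `D` absorbs the square roots: `ρ^x = Tr_D[(R^x ⊗ I) γ]`, so
the `ρ^x` sum to `ρ`. Orthogonality then gives `ρ ρ^x = (ρ^x)² = ρ^x ρ`; hence `ρ` commutes with
every `ρ^x`, and in the ring of matrices the elements `Q^x := ρ⁻¹ ρ^x` are Hermitian, complete
orthogonal idempotents with `Q^x ρ Q^x = ρ^x`. Finally
`Tr[(R^{x'} ⊗ Q^x) γ] = Tr[Q^x ρ^{x'}] = Tr[ρ⁻¹ ρ^x ρ^{x'}] = 0` for `x ≠ x'`.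
-/

namespace Matrix.PosSemidef

variable {n 𝕜 : Type*} [Fintype n] [DecidableEq n] [RCLike 𝕜] {A : Matrix n n 𝕜}

lemma sqrt_mul_self (hA : A.PosSemidef) : hA.sqrt * hA.sqrt = A := by
  set U : Matrix n n 𝕜 := hA.1.eigenvectorUnitary.1
  have hUU : (star hA.1.eigenvectorUnitary : Matrix n n 𝕜) * U = 1 := by simp [U]
  have hdiag : (diagonal ((↑) ∘ (√·) ∘ hA.1.eigenvalues) : Matrix n n 𝕜) *
      diagonal ((↑) ∘ (√·) ∘ hA.1.eigenvalues) = diagonal (RCLike.ofReal ∘ hA.1.eigenvalues) := by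
    rw [diagonal_mul_diagonal]
    congr 1
    funext i
    simp [← RCLike.ofReal_mul, Real.mul_self_sqrt (hA.eigenvalues_nonneg i)]
  conv_rhs => rw [hA.1.spectral_theorem, Unitary.conjStarAlgAut_apply]
  simp only [sqrt, Matrix.mul_assoc]
  rw [← Matrix.mul_assoc _ U, hUU, Matrix.one_mul, ← Matrix.mul_assoc _ _ (star _ : Matrix n n 𝕜),
    hdiag]

lemma posSemidef_sqrt (hA : A.PosSemidef) : hA.sqrt.PosSemidef :=
  (posSemidef_diagonal_iff.2 fun _ => RCLike.ofReal_nonneg.2 (Real.sqrt_nonneg _)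
    ).mul_mul_conjTranspose_same _

end Matrix.PosSemidef

section OrthogonalDecomposition

variable {R X : Type*} [Ring R] [Fintype X] {σ : X → R}

lemma sum_mul_eq_mul_self_of_pairwise (hσ : Pairwise fun x y => σ x * σ y = 0) (x : X) :
    (∑ y, σ y) * σ x = σ x * σ x := by
  rw [Finset.sum_mul, Finset.sum_eq_single x (fun y _ hy => hσ hy) (by simp)]

lemma commute_sum_of_pairwise_mul_eq_zero (hσ : Pairwise fun x y => σ x * σ y = 0) (x : X) :
    Commute (∑ y, σ y) (σ x) := by
  have hright : σ x * ∑ y, σ y = σ x * σ x := by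
    rw [Finset.mul_sum, Finset.sum_eq_single x (fun y _ hy => hσ hy.symm) (by simp)]
  exact (sum_mul_eq_mul_self_of_pairwise hσ x).trans hright.symm

variable {u : Rˣ}

lemma commute_units_inv_of_eq_sum (hσ : Pairwise fun x y => σ x * σ y = 0)
    (hu : (u : R) = ∑ x, σ x) (x : X) : Commute (↑u⁻¹ : R) (σ x) :=
  (hu ▸ commute_sum_of_pairwise_mul_eq_zero hσ x).units_inv_left

lemma completeOrthogonalIdempotents_units_inv_mul (hσ : Pairwise fun x y => σ x * σ y = 0)
    (hu : (u : R) = ∑ x, σ x) : CompleteOrthogonalIdempotents fun x => ↑u⁻¹ * σ x := by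
  have hcomm := commute_units_inv_of_eq_sum hσ hu
  refine ⟨⟨fun x => ?_, fun x y hxy => ?_⟩, ?_⟩
  · calc ↑u⁻¹ * σ x * (↑u⁻¹ * σ x) = ↑u⁻¹ * (↑u⁻¹ * (u * σ x)) := by
          rw [mul_assoc, (hcomm x).symm.left_comm, hu, sum_mul_eq_mul_self_of_pairwise hσ]
      _ = ↑u⁻¹ * σ x := by rw [Units.inv_mul_cancel_left]
  · show ↑u⁻¹ * σ x * (↑u⁻¹ * σ y) = 0
    rw [mul_assoc, (hcomm x).symm.left_comm, hσ hxy, mul_zero, mul_zero]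
  · rw [← Finset.mul_sum, ← hu, Units.inv_mul]

lemma units_inv_mul_mul_units_mul (hσ : Pairwise fun x y => σ x * σ y = 0)
    (hu : (u : R) = ∑ x, σ x) (x : X) : ↑u⁻¹ * σ x * u * (↑u⁻¹ * σ x) = σ x := by
  have hsq := sum_mul_eq_mul_self_of_pairwise hσ x
  rw [← hu] at hsq
  rw [mul_assoc, Units.mul_inv_cancel_left, mul_assoc, ← hsq, Units.inv_mul_cancel_left]

lemma isSelfAdjoint_units_inv_mul [StarRing R] (hσ : Pairwise fun x y => σ x * σ y = 0)
    (hu : (u : R) = ∑ x, σ x) (hself : ∀ x, IsSelfAdjoint (σ x)) (x : X) :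
    IsSelfAdjoint (↑u⁻¹ * σ x) := by
  have hu_self : IsSelfAdjoint (u : R) := hu ▸ isSelfAdjoint_sum _ fun y _ => hself y
  have hstar : star u = u := Units.ext (by rw [Units.coe_star, hu_self.star_eq])
  rw [IsSelfAdjoint, star_mul, (hself x).star_eq, ← Units.coe_star_inv, hstar,
    (commute_units_inv_of_eq_sum hσ hu x).eq]

end OrthogonalDecomposition

lemma Matrix.sum_kronecker {ι α l m n p : Type*} [NonUnitalNonAssocSemiring α] (s : Finset ι)
    (A : ι → Matrix l m α) (B : Matrix n p α) : (∑ i ∈ s, A i) ⊗ₖ B = ∑ i ∈ s, A i ⊗ₖ B := by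
  ext ⟨i, i'⟩ ⟨j, j'⟩
  simp only [kronecker_apply, Matrix.sum_apply, Finset.sum_mul]

section PartialTrace

variable {D E : Type*} [Fintype D] [Fintype E]

lemma ptraceLeft_conjTranspose (γ : Matrix (D × E) (D × E) ℂ) :
    ptraceLeft γᴴ = (ptraceLeft γ)ᴴ := by
  ext e e'
  simp [ptraceLeft, conjTranspose_apply]

lemma Matrix.IsHermitian.ptraceLeft {γ : Matrix (D × E) (D × E) ℂ} (hγ : γ.IsHermitian) :
    (ptraceLeft γ).IsHermitian := by
  rw [IsHermitian, ← ptraceLeft_conjTranspose, hγ.eq]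

lemma ptraceLeft_sum {X : Type*} (s : Finset X) (f : X → Matrix (D × E) (D × E) ℂ) :
    ptraceLeft (∑ x ∈ s, f x) = ∑ x ∈ s, ptraceLeft (f x) := by
  ext e e'
  simp only [ptraceLeft, of_apply, Matrix.sum_apply]
  exact Finset.sum_comm

lemma trace_one_kronecker_mul [DecidableEq D] (B : Matrix E E ℂ) (γ : Matrix (D × E) (D × E) ℂ) :
    trace ((1 ⊗ₖ B) * γ) = trace (B * ptraceLeft γ) := by
  simp only [trace, diag, ptraceLeft, of_apply, mul_apply, kronecker_apply, Fintype.sum_prod_type,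
    one_apply, ite_mul, one_mul, zero_mul, Finset.sum_ite_irrel, Finset.sum_const_zero]
  conv_lhs => enter [2, d]; rw [Finset.sum_comm]
  simp only [Finset.sum_ite_irrel, Finset.sum_const_zero, Finset.sum_ite_eq, Finset.mem_univ,
    if_true, Finset.mul_sum]
  rw [Finset.sum_comm]
  exact Finset.sum_congr rfl fun _ _ => Finset.sum_comm

lemma ptraceLeft_mul_kronecker_one [DecidableEq E] (γ : Matrix (D × E) (D × E) ℂ)
    (B : Matrix D D ℂ) :
    ptraceLeft (γ * (B ⊗ₖ 1)) = ptraceLeft ((B ⊗ₖ 1) * γ) := by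
  ext e e'
  simp only [ptraceLeft, of_apply, mul_apply, kronecker_apply, Fintype.sum_prod_type, one_apply,
    mul_ite, mul_one, mul_zero, ite_mul, zero_mul, Finset.sum_ite_eq, Finset.sum_ite_eq',
    Finset.mem_univ, if_true]
  rw [Finset.sum_comm]
  simp only [mul_comm]

lemma ptraceLeft_kronecker_one_mul_mul [DecidableEq E] (A B : Matrix D D ℂ)
    (γ : Matrix (D × E) (D × E) ℂ) :
    ptraceLeft ((A ⊗ₖ 1) * γ * (B ⊗ₖ 1)) = ptraceLeft (((B * A) ⊗ₖ 1) * γ) := by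
  rw [ptraceLeft_mul_kronecker_one, ← Matrix.mul_assoc, ← mul_kronecker_mul, Matrix.one_mul]

lemma trace_kronecker_mul [DecidableEq D] [DecidableEq E] (A : Matrix D D ℂ) (B : Matrix E E ℂ)
    (γ : Matrix (D × E) (D × E) ℂ) :
    trace ((A ⊗ₖ B) * γ) = trace (B * ptraceLeft ((A ⊗ₖ 1) * γ)) := by
  rw [← trace_one_kronecker_mul, ← Matrix.mul_assoc, ← mul_kronecker_mul, Matrix.one_mul,
    Matrix.mul_one]

lemma sum_ptraceLeft_kronecker_one_mul [DecidableEq D] [DecidableEq E] {X : Type*} [Fintype X]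
    {R : X → Matrix D D ℂ} (hR : ∑ x, R x = 1) (γ : Matrix (D × E) (D × E) ℂ) :
    ∑ x, ptraceLeft ((R x ⊗ₖ 1) * γ) = ptraceLeft γ := by
  rw [← ptraceLeft_sum, ← Finset.sum_mul, ← Matrix.sum_kronecker, hR, one_kronecker_one,
    Matrix.one_mul]

end PartialTrace

theorem stmt19_general {D E X : Type*} [Fintype D] [DecidableEq D] [Fintype E] [DecidableEq E]
    [Fintype X]
    (γ : Matrix (D × E) (D × E) ℂ) (hγ : γ.PosSemidef)
    (hfull : (ptraceLeft γ).PosDef)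
    (R : X → Matrix D D ℂ) (hR : ∀ x, (R x).PosSemidef) (hRsum : ∑ x, R x = 1)
    (horth : ∀ x x', x ≠ x' →
      ptraceLeft (((hR x).sqrt ⊗ₖ (1 : Matrix E E ℂ)) * γ *
          ((hR x).sqrt ⊗ₖ (1 : Matrix E E ℂ))) *
        ptraceLeft (((hR x').sqrt ⊗ₖ (1 : Matrix E E ℂ)) * γ *
          ((hR x').sqrt ⊗ₖ (1 : Matrix E E ℂ))) = 0) :
    ∃ Q : X → Matrix E E ℂ,
      (∀ x, (Q x).IsHermitian) ∧ (∀ x, Q x * Q x = Q x) ∧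
      (∀ x x', x ≠ x' → Q x * Q x' = 0) ∧ (∑ x, Q x = 1) ∧
      (∀ x, Q x * ptraceLeft γ * Q x
        = ptraceLeft (((hR x).sqrt ⊗ₖ (1 : Matrix E E ℂ)) * γ *
            ((hR x).sqrt ⊗ₖ (1 : Matrix E E ℂ)))) ∧
      (∀ x x', x ≠ x' → ((R x' ⊗ₖ Q x) * γ).trace = 0) := by
  have hσ (x : X) : ptraceLeft (((hR x).sqrt ⊗ₖ (1 : Matrix E E ℂ)) * γ *
      ((hR x).sqrt ⊗ₖ (1 : Matrix E E ℂ))) =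
      ptraceLeft ((R x ⊗ₖ (1 : Matrix E E ℂ)) * γ) := by
    rw [ptraceLeft_kronecker_one_mul_mul, (hR x).sqrt_mul_self]
  have hσ_self (x : X) : IsSelfAdjoint (ptraceLeft ((R x ⊗ₖ (1 : Matrix E E ℂ)) * γ)) := by
    have hS : ((hR x).sqrt ⊗ₖ (1 : Matrix E E ℂ))ᴴ = (hR x).sqrt ⊗ₖ 1 := by
      rw [conjTranspose_kronecker, (hR x).posSemidef_sqrt.isHermitian.eq, conjTranspose_one]
    have hherm := (isHermitian_mul_mul_conjTranspose ((hR x).sqrt ⊗ₖ (1 : Matrix E E ℂ))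
      hγ.isHermitian).ptraceLeft
    rwa [hS, hσ] at hherm
  simp only [hσ] at horth ⊢
  let u := hfull.isUnit.unit
  have hu : (u : Matrix E E ℂ) = ∑ x, ptraceLeft ((R x ⊗ₖ 1) * γ) :=
    (sum_ptraceLeft_kronecker_one_mul hRsum γ).symm
  have hQ := completeOrthogonalIdempotents_units_inv_mul horth hu
  refine ⟨fun x => (↑u⁻¹ : Matrix E E ℂ) * ptraceLeft ((R x ⊗ₖ 1) * γ),
    isSelfAdjoint_units_inv_mul horth hu hσ_self, fun x => (hQ.idem x).eq,
    fun _ _ hne => hQ.ortho hne, hQ.complete, units_inv_mul_mul_units_mul horth hu,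
    fun x x' hne => ?_⟩
  rw [trace_kronecker_mul, Matrix.mul_assoc, horth x x' hne, Matrix.mul_zero, trace_zero]

/-- if ρ = Tr_D γ has full support and the post-measurement
second-player states ρ^x = Tr_D[(√R^x ⊗ I) γ (√R^x ⊗ I)] are pairwise
orthogonally supported, then there is a projective measurement {Q^x} on E with
Q^x ρ Q^x = ρ^x, and measuring {R^x} on D and {Q^x} on E always agrees:
Tr[(R^{x'} ⊗ Q^x) γ] = 0 for x ≠ x'. -/
theorem stmt19 {D E X : Type*} [Fintype D] [DecidableEq D] [Fintype E] [DecidableEq E]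
    [Fintype X] [DecidableEq X]
    (γ : Matrix (D × E) (D × E) ℂ) (hγ : γ.PosSemidef) (htr : γ.trace = 1)
    (hfull : (ptraceLeft γ).PosDef)
    (R : X → Matrix D D ℂ) (hR : ∀ x, (R x).PosSemidef) (hRsum : ∑ x, R x = 1)
    (horth : ∀ x x', x ≠ x' →
      ptraceLeft (((hR x).sqrt ⊗ₖ (1 : Matrix E E ℂ)) * γ *
          ((hR x).sqrt ⊗ₖ (1 : Matrix E E ℂ))) *
        ptraceLeft (((hR x').sqrt ⊗ₖ (1 : Matrix E E ℂ)) * γ *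
          ((hR x').sqrt ⊗ₖ (1 : Matrix E E ℂ))) = 0) :
    ∃ Q : X → Matrix E E ℂ,
      (∀ x, (Q x).IsHermitian) ∧ (∀ x, Q x * Q x = Q x) ∧
      (∀ x x', x ≠ x' → Q x * Q x' = 0) ∧ (∑ x, Q x = 1) ∧
      (∀ x, Q x * ptraceLeft γ * Q x
        = ptraceLeft (((hR x).sqrt ⊗ₖ (1 : Matrix E E ℂ)) * γ *
            ((hR x).sqrt ⊗ₖ (1 : Matrix E E ℂ)))) ∧
      (∀ x x', x ≠ x' → ((R x' ⊗ₖ Q x) * γ).trace = 0) :=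
  stmt19_general γ hγ hfull R hR hRsum horth
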